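/- Let K be a field containing μ_n(K) (with char K ∤ n), f ∈ K×, d the maximal divisor of n with f a d-th power, assume additionally K contains a root of T^4+4. Then the natural action of μ_n(K) on K[T]/(T^n − f) (acting trivially on K, by multiplication on T) permutes transitively the d field factors of the product decomposition ∏_{ζ∈μ_d(K)} K[T]/(T^{n'} − ζg). -/

import Mathlib

open Polynomial IntermediateField

/-! With `ω` a primitive `n`-th root of unity and `ω' = ω ^ n'`, a primitive `d`-th root,
`Tⁿ - f = ∏_{i < d} (T^{n'} - ω'^i g)`. No `ω'^i g` is a `p`-th power for a prime `p ∣ n'`, since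
`f` would then be a `pd`-th power; so each factor is irreducible by Capelli's theorem, in the form
valid over a field with a primitive `n'`-th root of unity (which contains `i` when `4 ∣ n'`).
Hence the primes of `K[T]/(Tⁿ - f)` are the maximal ideals `(T^{n'} - ω'^i g)`, and the
automorphism `T ↦ ω^{j-i} T` carries the `j`-th factor to a scalar multiple of the `i`-th. -/

theorem IntermediateField.AdjoinSimple.norm_gen_of_minpoly_eq_X_pow_sub_C {K E : Type*}
    [Field K] [Field E] [Algebra K E] {x : E} {m : ℕ} (hm : m ≠ 0) {a : K} (hx : minpoly K x = X ^ m - C a) :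
    Algebra.norm K (AdjoinSimple.gen K x) = (-1) ^ (m + 1) * a := by
  have hint : IsIntegral K x := by
    by_contra h
    exact X_pow_sub_C_ne_zero (Nat.pos_of_ne_zero hm) a (hx ▸ minpoly.eq_zero h)
  rw [← adjoin.powerBasis_gen hint, Algebra.PowerBasis.norm_gen_eq_coeff_zero_minpoly]
  simp [minpoly_gen, hx, hm.symm, pow_succ]

theorem IsPrimitiveRoot.exists_pow_eq_neg_one_pow {K : Type*} [Field K] {ζ : K} {p m q : ℕ}
    (hζ : IsPrimitiveRoot ζ (p * m)) (hp : p.Prime) (hm : m ≠ 0) (hq : q ∣ m) :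
    ∃ ε : K, ε ^ q = (-1) ^ (p + 1) := by
  rcases hp.eq_two_or_odd' with rfl | hodd
  · obtain ⟨k, rfl⟩ := hq
    have hζ2 : IsPrimitiveRoot (ζ ^ (q * k)) 2 := hζ.pow (by positivity) (mul_comm _ _)
    exact ⟨ζ ^ k, by rw [← pow_mul, mul_comm k, hζ2.eq_neg_one_of_two_right]; norm_num⟩
  · exact ⟨1, by rw [one_pow, hodd.add_one.neg_one_pow]⟩

theorem X_pow_sub_C_irreducible_of_isPrimitiveRoot {K : Type*} [Field K] {n : ℕ} (hn : n ≠ 0)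
    {ζ : K} (hζ : IsPrimitiveRoot ζ n) {a : K}
    (ha : ∀ p : ℕ, p.Prime → p ∣ n → ∀ b : K, b ^ p ≠ a) :
    Irreducible (X ^ n - C a) := by
  induction n using induction_on_primes generalizing K with
  | zero => exact absurd rfl hn
  | one => simpa using irreducible_X_sub_C a
  | prime_mul p m hp IH =>
    have hm : m ≠ 0 := right_ne_zero_of_mul hn
    rw [mul_comm]
    refine X_pow_mul_sub_C_irreducible
      (X_pow_sub_C_irreducible_of_prime hp (ha p hp (dvd_mul_right _ _))) fun E _ _ x hx ↦ ?_
    have hζp : IsPrimitiveRoot (algebraMap K K⟮x⟯ (ζ ^ p)) m :=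
      (hζ.pow (Nat.pos_of_ne_zero hn) rfl).map_of_injective (algebraMap K K⟮x⟯).injective
    refine IH hm hζp fun q hq hqm b hb ↦ ?_
    -- Norms down to `K` turn `b ^ q = x` into `N(b) ^ q = ± a`, and the sign is a `q`-th power.
    obtain ⟨ε, hε⟩ := hζ.exists_pow_eq_neg_one_pow hp hm hqm
    refine ha q hq (dvd_mul_of_dvd_right hqm p) (ε * Algebra.norm K b) ?_
    rw [mul_pow, ← map_pow, hb, AdjoinSimple.norm_gen_of_minpoly_eq_X_pow_sub_C hp.ne_zero hx,
      hε, ← mul_assoc, ← mul_pow, neg_one_mul, neg_neg, one_pow, one_mul]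

theorem X_pow_mul_sub_C_eq_prod {R : Type*} [CommRing R] [IsDomain R] {ζ : R} {d : ℕ}
    (hζ : IsPrimitiveRoot ζ d) (hd : 0 < d) {g f : R} (hg : g ^ d = f) (m : ℕ) :
    X ^ (d * m) - C f = ∏ i ∈ Finset.range d, (X ^ m - C (ζ ^ i * g)) := by
  calc X ^ (d * m) - C f = (X ^ d - C f).comp (X ^ m) := by
        rw [sub_comp, pow_comp, X_comp, C_comp, ← pow_mul, mul_comm]
    _ = ∏ i ∈ Finset.range d, (X ^ m - C (ζ ^ i * g)) := by
        simp only [X_pow_sub_C_eq_prod hζ hd hg, prod_comp, sub_comp, X_comp, C_comp]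

theorem X_pow_sub_C_irreducible_of_pow_eq_of_forall_le {K : Type*} [Field K] {n d n' : ℕ}
    (hn : 0 < n) (hn' : n = d * n') {ω : K} (hω : IsPrimitiveRoot ω n) {f c : K} (hc : c ^ d = f)
    (hmax : ∀ e : ℕ, e ∣ n → (∃ h : K, h ^ e = f) → e ≤ d) :
    Irreducible (X ^ n' - C c) := by
  have hd : 0 < d := Nat.pos_of_mul_pos_right (hn' ▸ hn)
  refine X_pow_sub_C_irreducible_of_isPrimitiveRoot (Nat.pos_of_mul_pos_left (hn' ▸ hn)).ne'
    (hω.pow hn hn') fun p hp hpn' b hb ↦ ?_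
  have hle : p * d ≤ d := hmax (p * d) (hn' ▸ mul_comm d p ▸ mul_dvd_mul_left d hpn')
    ⟨b, by rw [pow_mul, hb, hc]⟩
  nlinarith [hp.two_le]

theorem AdjoinRoot.isMaximal_span_mk_of_irreducible {K : Type*} [Field K] {h q : K[X]}
    (hq : Irreducible q) (hdvd : q ∣ h) : (Ideal.span {AdjoinRoot.mk h q}).IsMaximal := by
  have : (Ideal.span {q}).IsMaximal := PrincipalIdealRing.isMaximal_of_irreducible hq
  have hker : RingHom.ker (AdjoinRoot.mk h) ≤ Ideal.span {q} := fun x hx ↦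
    Ideal.mem_span_singleton.mpr (hdvd.trans (AdjoinRoot.mk_eq_zero.mp hx))
  simpa [Ideal.map_span] using this.map_of_surjective_of_ker_le AdjoinRoot.mk_surjective hker

theorem AdjoinRoot.exists_eq_span_mk_of_isPrime {K ι : Type*} [Field K] {h : K[X]} {s : Finset ι}
    {q : ι → K[X]} (hprod : h = ∏ i ∈ s, q i) (hq : ∀ i ∈ s, Irreducible (q i))
    {J : Ideal (AdjoinRoot h)} (hJ : J.IsPrime) :
    ∃ i ∈ s, J = Ideal.span {AdjoinRoot.mk h (q i)} := by
  have hmem : ∏ i ∈ s, AdjoinRoot.mk h (q i) ∈ J := by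
    rw [← map_prod, ← hprod, AdjoinRoot.mk_self]
    exact J.zero_mem
  obtain ⟨i, hi, hqi⟩ := hJ.prod_mem_iff.mp hmem
  have hmax := isMaximal_span_mk_of_irreducible (hq i hi) (hprod ▸ Finset.dvd_prod_of_mem q hi)
  exact ⟨i, hi, (hmax.eq_of_le hJ.ne_top ((Ideal.span_singleton_le_iff_mem J).mpr hqi)).symm⟩

theorem AdjoinRoot.map_mk_X_pow_sub_C {K F : Type*} [Field K] {h : K[X]}
    [FunLike F (AdjoinRoot h) (AdjoinRoot h)] [AlgHomClass F K (AdjoinRoot h) (AdjoinRoot h)]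
    (σ : F) {ξ : K}
    (hσ : σ (root h) = algebraMap K _ ξ * root h) (m : ℕ) {c c' : K} (hc : ξ ^ m * c' = c) :
    σ (mk h (X ^ m - C c)) = algebraMap K _ (ξ ^ m) * mk h (X ^ m - C c') := by
  simp only [map_sub, map_pow, mk_X, mk_C, ← algebraMap_eq, AlgHomClass.commutes, hσ, ← hc,
    map_mul]
  ring

theorem IsPrimitiveRoot.exists_pow_eq_one_and_pow_mul_pow_eq {K : Type*} [Field K] {ω : K}
    {n : ℕ} (hω : IsPrimitiveRoot ω n) (hn : n ≠ 0) (m i j : ℕ) :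
    ∃ ξ : K, ξ ^ n = 1 ∧ ξ ^ m * (ω ^ m) ^ i = (ω ^ m) ^ j := by
  refine ⟨ω ^ j / ω ^ i, ?_, ?_⟩
  · rw [div_pow, pow_right_comm ω j n, pow_right_comm ω i n, hω.pow_eq_one, one_pow, one_pow,
      div_one]
  · have : ω ≠ 0 := hω.ne_zero hn
    rw [div_pow, pow_right_comm ω j m, pow_right_comm ω i m]
    field_simp

theorem AdjoinRoot.exists_algEquiv_root_eq_mul {K : Type*} [Field K] {n : ℕ} (hn : n ≠ 0)
    {ξ : K} (hξ : ξ ^ n = 1) (f : K) :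
    ∃ σ : AdjoinRoot (X ^ n - C f) ≃ₐ[K] AdjoinRoot (X ^ n - C f),
      σ (root _) = algebraMap K _ ξ * root _ := by
  have : NeZero n := ⟨hn⟩
  refine ⟨autAdjoinRootXPowSubC n f (rootsOfUnity.mkOfPowEq ξ hξ), ?_⟩
  rw [autAdjoinRootXPowSubC_root, Algebra.smul_def]
  rfl

theorem stmt_8_general (K : Type*) [Field K] (n : ℕ) (hn : 0 < n)
    (hμ : ∃ ζ : K, IsPrimitiveRoot ζ n)
    (f : K) (d : ℕ) (g : K) (hg : g ^ d = f)
    (hmax : ∀ e : ℕ, e ∣ n → (∃ h : K, h ^ e = f) → e ≤ d)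
    (n' : ℕ) (hn' : n = d * n') :
    ∀ P Q' : Ideal (AdjoinRoot (X ^ n - C f)),
      P ∈ minimalPrimes (AdjoinRoot (X ^ n - C f)) →
      Q' ∈ minimalPrimes (AdjoinRoot (X ^ n - C f)) →
      ∃ (ξ : K) (_ : ξ ^ n = 1)
        (σ : AdjoinRoot (X ^ n - C f) ≃ₐ[K] AdjoinRoot (X ^ n - C f)),
        σ (AdjoinRoot.root _) =
            algebraMap K (AdjoinRoot (X ^ n - C f)) ξ * AdjoinRoot.root _ ∧
          Ideal.comap (σ : AdjoinRoot (X ^ n - C f) →+* AdjoinRoot (X ^ n - C f)) P = Q' := by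
  intro P Q hP hQ
  obtain ⟨ω, hω⟩ := hμ
  have hω' : IsPrimitiveRoot (ω ^ n') d := hω.pow hn (hn'.trans (mul_comm d n'))
  have hfact : X ^ n - C f = ∏ i ∈ Finset.range d, (X ^ n' - C ((ω ^ n') ^ i * g)) :=
    hn' ▸ X_pow_mul_sub_C_eq_prod hω' (Nat.pos_of_mul_pos_right (hn' ▸ hn)) hg n'
  have hirr (i : ℕ) (_ : i ∈ Finset.range d) : Irreducible (X ^ n' - C ((ω ^ n') ^ i * g)) :=
    X_pow_sub_C_irreducible_of_pow_eq_of_forall_le hn hn' hω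
      (by rw [mul_pow, pow_right_comm _ i d, hω'.pow_eq_one, one_pow, one_mul, hg]) hmax
  obtain ⟨i, -, rfl⟩ := AdjoinRoot.exists_eq_span_mk_of_isPrime hfact hirr hP.1.1
  obtain ⟨j, hj, rfl⟩ := AdjoinRoot.exists_eq_span_mk_of_isPrime hfact hirr hQ.1.1
  obtain ⟨ξ, hξ, hξij⟩ := hω.exists_pow_eq_one_and_pow_mul_pow_eq hn.ne' n' i j
  obtain ⟨σ, hσ⟩ := AdjoinRoot.exists_algEquiv_root_eq_mul hn.ne' hξ f
  refine ⟨ξ, hξ, σ, hσ, ((AdjoinRoot.isMaximal_span_mk_of_irreducible (hirr j hj)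
    (hfact ▸ Finset.dvd_prod_of_mem _ hj)).eq_of_le (Ideal.comap_ne_top _ hP.1.1.ne_top) ?_).symm⟩
  rw [Ideal.span_singleton_le_iff_mem, Ideal.mem_comap, RingHom.coe_coe,
    AdjoinRoot.map_mk_X_pow_sub_C σ hσ n' (by rw [← mul_assoc, hξij])]
  exact Ideal.mul_mem_left _ _ (Ideal.mem_span_singleton_self _)

/-- With `K`, `n`, `f`, `d`, `g`, `n' = n/d` as in the decomposition lemma, the natural action
of `μ_n(K)` on `K[T]/(Tⁿ - f)` (trivial on `K`, by multiplication on `T`) permutes transitively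
the `d` field factors (i.e. the minimal primes) of `K[T]/(Tⁿ - f)`. -/
theorem stmt_8 (K : Type*) [Field K] (n : ℕ) (hn : 0 < n)
    (hchar : ¬ (ringChar K ∣ n)) (hμ : ∃ ζ : K, IsPrimitiveRoot ζ n)
    (hy : ∃ y : K, y ^ 4 = -4)
    (f : K) (hf : f ≠ 0) (d : ℕ) (hd : d ∣ n) (g : K) (hg : g ^ d = f)
    (hmax : ∀ e : ℕ, e ∣ n → (∃ h : K, h ^ e = f) → e ≤ d)
    (n' : ℕ) (hn' : n = d * n') :
    ∀ P Q' : Ideal (AdjoinRoot (X ^ n - C f)),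
      P ∈ minimalPrimes (AdjoinRoot (X ^ n - C f)) →
      Q' ∈ minimalPrimes (AdjoinRoot (X ^ n - C f)) →
      ∃ (ξ : K) (_ : ξ ^ n = 1)
        (σ : AdjoinRoot (X ^ n - C f) ≃ₐ[K] AdjoinRoot (X ^ n - C f)),
        σ (AdjoinRoot.root _) =
            algebraMap K (AdjoinRoot (X ^ n - C f)) ξ * AdjoinRoot.root _ ∧
          Ideal.comap (σ : AdjoinRoot (X ^ n - C f) →+* AdjoinRoot (X ^ n - C f)) P = Q' :=
  stmt_8_general K n hn hμ f d g hg hmax n' hn'
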